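/- arXiv:2012.06978 — 4 statements merged into one kernel-verified Lean document; each statement's English description precedes it below -/
import Mathlib

section
/- Miquel's Theorem: Let A, B, C be the vertices of a (nondegenerate) triangle in the plane, and let D, E, F be points on the lines through C and B, through A and C, and through A and B, respectively (with D, E, F chosen so that each of the triangles EAF, FBD, DCE is nondegenerate). Then the three circumcircles of triangles EAF, FBD, and DCE have a common point of intersection. -/
open EuclideanGeometry Affine Real

private theorem miquel_ai_ne01 {V : Type*} {P : Type*} [AddCommGroup V] [Module ℝ V]
    [AddTorsor V P] {X Y Z : P} (h : AffineIndependent ℝ ![X, Y, Z]) : X ≠ Y := by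
  simpa using h.injective.ne (show (0 : Fin 3) ≠ 1 by decide)

private theorem miquel_ai_ne02 {V : Type*} {P : Type*} [AddCommGroup V] [Module ℝ V]
    [AddTorsor V P] {X Y Z : P} (h : AffineIndependent ℝ ![X, Y, Z]) : X ≠ Z := by
  simpa using h.injective.ne (show (0 : Fin 3) ≠ 2 by decide)

private theorem miquel_ai_ne12 {V : Type*} {P : Type*} [AddCommGroup V] [Module ℝ V]
    [AddTorsor V P] {X Y Z : P} (h : AffineIndependent ℝ ![X, Y, Z]) : Y ≠ Z := by
  simpa using h.injective.ne (show (1 : Fin 3) ≠ 2 by decide)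

private theorem miquel_group_helper {G : Type*} [AddCommGroup G] {x y z : G}
    (h : x + y + z = 0) : -x + -z = y := by
  have h2 : (-x + -z) - y = -(x + y + z) := by abel
  have h3 : (-x + -z) - y = 0 := by rw [h2, h, neg_zero]
  exact sub_eq_zero.mp h3

/-- Miquel's theorem: Let `A, B, C` be the vertices of a nondegenerate
triangle in the plane, and let `D, E, F` be points on the lines `CB`, `AC`, `AB`
respectively, chosen so that the triangles `EAF`, `FBD`, `DCE` are nondegenerate.  Then
the circumcircles of `EAF`, `FBD` and `DCE` have a common point of intersection. -/
theorem miquel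
    {V : Type*} {P : Type*} [NormedAddCommGroup V] [InnerProductSpace ℝ V]
    [MetricSpace P] [NormedAddTorsor V P]
    [Fact (Module.finrank ℝ V = 2)] [Module.Oriented ℝ V (Fin 2)]
    (A B C D E F : P)
    (hABC : AffineIndependent ℝ ![A, B, C])
    (hD : D ∈ line[ℝ, C, B]) (hE : E ∈ line[ℝ, A, C]) (hF : F ∈ line[ℝ, A, B])
    (hEAF : AffineIndependent ℝ ![E, A, F])
    (hFBD : AffineIndependent ℝ ![F, B, D])
    (hDCE : AffineIndependent ℝ ![D, C, E]) :
    ∃ G : P,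
      G ∈ (⟨![E, A, F], hEAF⟩ : Simplex ℝ P 2).circumsphere ∧
      G ∈ (⟨![F, B, D], hFBD⟩ : Simplex ℝ P 2).circumsphere ∧
      G ∈ (⟨![D, C, E], hDCE⟩ : Simplex ℝ P 2).circumsphere := by
  haveI : FiniteDimensional ℝ V := FiniteDimensional.of_fact_finrank_eq_two
  have hAB : A ≠ B := miquel_ai_ne01 hABC
  have hAC : A ≠ C := miquel_ai_ne02 hABC
  have hBC : B ≠ C := miquel_ai_ne12 hABC
  have hEA : E ≠ A := miquel_ai_ne01 hEAF
  have hEF : E ≠ F := miquel_ai_ne02 hEAF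
  have hAF : A ≠ F := miquel_ai_ne12 hEAF
  have hFB : F ≠ B := miquel_ai_ne01 hFBD
  have hFD : F ≠ D := miquel_ai_ne02 hFBD
  have hBD : B ≠ D := miquel_ai_ne12 hFBD
  have hDC : D ≠ C := miquel_ai_ne01 hDCE
  have hDE : D ≠ E := miquel_ai_ne02 hDCE
  have hCE : C ≠ E := miquel_ai_ne12 hDCE
  set t₁ : Triangle ℝ P := ⟨![E, A, F], hEAF⟩ with ht₁
  set t₂ : Triangle ℝ P := ⟨![F, B, D], hFBD⟩ with ht₂
  set t₃ : Triangle ℝ P := ⟨![D, C, E], hDCE⟩ with ht₃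
  have hE1 : E ∈ t₁.circumsphere := t₁.mem_circumsphere 0
  have hA1 : A ∈ t₁.circumsphere := t₁.mem_circumsphere 1
  have hF1 : F ∈ t₁.circumsphere := t₁.mem_circumsphere 2
  have hF2 : F ∈ t₂.circumsphere := t₂.mem_circumsphere 0
  have hB2 : B ∈ t₂.circumsphere := t₂.mem_circumsphere 1
  have hD2 : D ∈ t₂.circumsphere := t₂.mem_circumsphere 2
  have hD3 : D ∈ t₃.circumsphere := t₃.mem_circumsphere 0
  have hE3 : E ∈ t₃.circumsphere := t₃.mem_circumsphere 2
  -- collinearity facts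
  have cD : Collinear ℝ ({D, C, B} : Set P) := collinear_insert_of_mem_affineSpan_pair hD
  have cE : Collinear ℝ ({E, A, C} : Set P) := collinear_insert_of_mem_affineSpan_pair hE
  have cF : Collinear ℝ ({F, A, B} : Set P) := collinear_insert_of_mem_affineSpan_pair hF
  have cD' : Collinear ℝ ({D, B, C} : Set P) := by rw [Set.pair_comm B C]; exact cD
  have cE' : Collinear ℝ ({E, C, A} : Set P) := by rw [Set.pair_comm C A]; exact cE
  have cF' : Collinear ℝ ({F, B, A} : Set P) := by rw [Set.pair_comm B A]; exact cF
  -- angle sum of triangle ABC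
  have hsum : ∡ A B C + ∡ B C A + ∡ C A B = π :=
    oangle_add_oangle_add_oangle_eq_pi hAB.symm hBC.symm hAC
  have hsum2 : (2 : ℤ) • ∡ A B C + (2 : ℤ) • ∡ B C A + (2 : ℤ) • ∡ C A B = 0 := by
    rw [← smul_add, ← smul_add, hsum, Real.Angle.two_zsmul_coe_pi]
  have key : (2 : ℤ) • ∡ C B A + (2 : ℤ) • ∡ B A C = (2 : ℤ) • ∡ B C A := by
    rw [oangle_rev A B C, oangle_rev C A B, smul_neg, smul_neg]
    exact miquel_group_helper hsum2
  -- replacing points along lines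
  have hDBF : (2 : ℤ) • ∡ D B F = (2 : ℤ) • ∡ C B A :=
    (cD'.two_zsmul_oangle_eq_left hBD.symm hBC.symm).trans
      (cF'.two_zsmul_oangle_eq_right hFB hAB)
  have hFAE : (2 : ℤ) • ∡ F A E = (2 : ℤ) • ∡ B A C :=
    (cF.two_zsmul_oangle_eq_left hAF.symm hAB.symm).trans
      (cE.two_zsmul_oangle_eq_right hEA hAC.symm)
  have hDCEangle : (2 : ℤ) • ∡ D C E = (2 : ℤ) • ∡ B C A :=
    (cD.two_zsmul_oangle_eq_left hDC hBC).trans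
      (cE'.two_zsmul_oangle_eq_right hCE.symm hAC)
  -- the membership criterion for the circumsphere of DCE
  have main : ∀ p : P, (2 : ℤ) • ∡ D p E = (2 : ℤ) • ∡ D C E → p ∈ t₃.circumsphere := by
    intro p hp
    exact Affine.Triangle.mem_circumsphere_of_two_zsmul_oangle_eq (t := t₃)
      (i₁ := 0) (i₂ := 1) (i₃ := 2) (by decide) (by decide) (by decide) hp
  by_cases hO : t₁.circumsphere.center = t₂.circumsphere.center
  · -- the two circumspheres coincide; D works
    have h1 := mem_sphere.mp hF1
    have h2 := mem_sphere.mp hF2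
    have hs : t₁.circumsphere = t₂.circumsphere :=
      Sphere.ext hO (by rw [← h1, ← h2, hO])
    exact ⟨D, by rw [hs]; exact hD2, hD2, hD3⟩
  · set L : AffineSubspace ℝ P :=
      line[ℝ, t₁.circumsphere.center, t₂.circumsphere.center] with hL
    haveI : Nonempty L := ⟨⟨_, left_mem_affineSpan_pair ℝ _ _⟩⟩
    have hO₁L : t₁.circumsphere.center ∈ L := left_mem_affineSpan_pair ℝ _ _
    have hO₂L : t₂.circumsphere.center ∈ L := right_mem_affineSpan_pair ℝ _ _
    set G : P := reflection L F with hGdef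
    have hG1 : G ∈ t₁.circumsphere := by
      rw [mem_sphere, hGdef, dist_comm, dist_reflection_eq_of_mem L hO₁L, dist_comm]
      exact mem_sphere.mp hF1
    have hG2 : G ∈ t₂.circumsphere := by
      rw [mem_sphere, hGdef, dist_comm, dist_reflection_eq_of_mem L hO₂L, dist_comm]
      exact mem_sphere.mp hF2
    by_cases hGD : G = D
    · exact ⟨D, by rw [← hGD]; exact hG1, hD2, hD3⟩
    by_cases hGE : G = E
    · exact ⟨E, hE1, by rw [← hGE]; exact hG2, hE3⟩
    -- nonzero radii give the centers distinct from F
    have hO1F : t₁.circumsphere.center ≠ F := by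
      intro h
      have h1 := mem_sphere.mp hF1
      rw [← h, dist_self] at h1
      have hr : (0 : ℝ) < t₁.circumsphere.radius := by
        rw [Simplex.circumsphere_radius]; exact t₁.circumradius_pos
      rw [← h1] at hr
      exact lt_irrefl _ hr
    have hO2F : t₂.circumsphere.center ≠ F := by
      intro h
      have h1 := mem_sphere.mp hF2
      rw [← h, dist_self] at h1
      have hr : (0 : ℝ) < t₂.circumsphere.radius := by
        rw [Simplex.circumsphere_radius]; exact t₂.circumradius_pos
      rw [← h1] at hr
      exact lt_irrefl _ hr
    by_cases hGF : G = F
    · -- tangency case: F itself is the Miquel point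
      have hFL : F ∈ L := by
        rw [← reflection_eq_self_iff (s := L) F, ← hGdef, hGF]
      have hcolF : Collinear ℝ
          ({t₂.circumsphere.center, F, t₁.circumsphere.center} : Set P) := by
        have h0 : Collinear ℝ ({F, t₁.circumsphere.center, t₂.circumsphere.center} : Set P) :=
          collinear_insert_of_mem_affineSpan_pair hFL
        have hset : ({t₂.circumsphere.center, F, t₁.circumsphere.center} : Set P) =
            ({F, t₁.circumsphere.center, t₂.circumsphere.center} : Set P) := by
          ext x; simp only [Set.mem_insert_iff, Set.mem_singleton_iff]; tauto
        rw [hset]; exact h0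
      have hiso1 : (2 : ℤ) • ∡ E F t₁.circumsphere.center + (2 : ℤ) • ∡ F A E = π :=
        Sphere.two_zsmul_oangle_center_add_two_zsmul_oangle_eq_pi hF1 hA1 hE1
          hAF hEA.symm hEF.symm
      have hiso2 : (2 : ℤ) • ∡ D F t₂.circumsphere.center + (2 : ℤ) • ∡ F B D = π :=
        Sphere.two_zsmul_oangle_center_add_two_zsmul_oangle_eq_pi hF2 hB2 hD2
          hFB.symm hBD hFD
      have e1 : (2 : ℤ) • ∡ D F t₂.circumsphere.center = (π : Real.Angle) - (2 : ℤ) • ∡ F B D :=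
        eq_sub_of_add_eq hiso2
      have e2 : (2 : ℤ) • ∡ E F t₁.circumsphere.center = (π : Real.Angle) - (2 : ℤ) • ∡ F A E :=
        eq_sub_of_add_eq hiso1
      have hadd : ∡ D F t₂.circumsphere.center + ∡ t₂.circumsphere.center F E = ∡ D F E :=
        oangle_add hFD.symm hO2F hEF
      have hrepl : (2 : ℤ) • ∡ t₂.circumsphere.center F E =
          (2 : ℤ) • ∡ t₁.circumsphere.center F E :=
        hcolF.two_zsmul_oangle_eq_left hO2F hO1F
      have hfbd : (2 : ℤ) • ∡ F B D = -((2 : ℤ) • ∡ C B A) := by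
        rw [oangle_rev D B F, smul_neg, hDBF]
      refine ⟨F, hF1, hF2, main F ?_⟩
      calc (2 : ℤ) • ∡ D F E
          = (2 : ℤ) • ∡ D F t₂.circumsphere.center
            + (2 : ℤ) • ∡ t₂.circumsphere.center F E := by rw [← smul_add, hadd]
        _ = ((π : Real.Angle) - (2 : ℤ) • ∡ F B D)
            + (2 : ℤ) • ∡ t₁.circumsphere.center F E := by rw [e1, hrepl]
        _ = ((π : Real.Angle) - (2 : ℤ) • ∡ F B D)
            - (2 : ℤ) • ∡ E F t₁.circumsphere.center := by
              rw [oangle_rev E F t₁.circumsphere.center, smul_neg]; abel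
        _ = ((π : Real.Angle) - (2 : ℤ) • ∡ F B D)
            - ((π : Real.Angle) - (2 : ℤ) • ∡ F A E) := by rw [e2]
        _ = (2 : ℤ) • ∡ F A E - (2 : ℤ) • ∡ F B D := by abel
        _ = (2 : ℤ) • ∡ B A C + (2 : ℤ) • ∡ C B A := by
              rw [hFAE, hfbd, sub_neg_eq_add]
        _ = (2 : ℤ) • ∡ B C A := by rw [add_comm]; exact key
        _ = (2 : ℤ) • ∡ D C E := hDCEangle.symm
    · -- main case: G is the second intersection point of the two circles
      have h1 : (2 : ℤ) • ∡ D G F = (2 : ℤ) • ∡ D B F :=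
        Sphere.two_zsmul_oangle_eq hD2 hG2 hB2 hF2 hGD hGF hBD hFB.symm
      have h2 : (2 : ℤ) • ∡ F G E = (2 : ℤ) • ∡ F A E :=
        Sphere.two_zsmul_oangle_eq hF1 hG1 hA1 hE1 hGF hGE hAF hEA.symm
      have hadd : ∡ D G F + ∡ F G E = ∡ D G E :=
        oangle_add (Ne.symm hGD) (fun h => hGF h.symm) (fun h => hGE h.symm)
      refine ⟨G, hG1, hG2, main G ?_⟩
      calc (2 : ℤ) • ∡ D G E
          = (2 : ℤ) • ∡ D G F + (2 : ℤ) • ∡ F G E := by rw [← smul_add, hadd]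
        _ = (2 : ℤ) • ∡ C B A + (2 : ℤ) • ∡ B A C := by rw [h1, h2, hDBF, hFAE]
        _ = (2 : ℤ) • ∡ B C A := key
        _ = (2 : ℤ) • ∡ D C E := hDCEangle.symm
end

section
/- Let A, B, C form a nondegenerate triangle and let D, E, F lie on lines CB, AC, AB respectively, with G a common point of the circumcircles of triangles EAF, FBD, DCE. Write the directed angles (mod π) α = ∡BAC, β = ∡CBA, γ = ∡ACB, α' = ∡EDF, β' = ∡FED, γ' = ∡DFE. Then ∡AGB = γ − α' − β', ∡BGC = α − β' − γ', and ∡CGA = β − γ' − α', all modulo π. -/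
open EuclideanGeometry Affine

section Aux

variable {V : Type*} {P : Type*} [NormedAddCommGroup V] [InnerProductSpace ℝ V]
    [MetricSpace P] [NormedAddTorsor V P]

private lemma colP₁ {a b c : P} (h : Collinear ℝ ({a, b, c} : Set P)) :
    Collinear ℝ ({b, a, c} : Set P) := by rwa [Set.insert_comm]

private lemma colP₂ {a b c : P} (h : Collinear ℝ ({a, b, c} : Set P)) :
    Collinear ℝ ({a, c, b} : Set P) := by rw [Set.pair_comm c b]; exact h

variable [Fact (Module.finrank ℝ V = 2)] [Module.Oriented ℝ V (Fin 2)]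

/-- One case of the Miquel angle computation; the other two follow by cyclic relabeling. -/
private lemma miquel_aux (A B C D E F G : P) (s₁ s₂ : EuclideanGeometry.Sphere P)
    (hA1 : A ∈ s₁) (hE1 : E ∈ s₁) (hF1 : F ∈ s₁) (hG1 : G ∈ s₁)
    (hB2 : B ∈ s₂) (hD2 : D ∈ s₂) (hF2 : F ∈ s₂) (hG2 : G ∈ s₂)
    (hc₁ : Collinear ℝ ({D, C, B} : Set P)) (hc₂ : Collinear ℝ ({E, A, C} : Set P))
    (hAG : A ≠ G) (hBG : B ≠ G) (hFG : F ≠ G)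
    (hGA : G ≠ A) (hGB : G ≠ B) (hGF : G ≠ F)
    (hEA : E ≠ A) (hEF : E ≠ F) (hDF : D ≠ F) (hDB : D ≠ B)
    (hAE : A ≠ E) (hCE : C ≠ E) (hBD : B ≠ D) (hCD : C ≠ D)
    (hDE : D ≠ E) (hFE : F ≠ E) (hFD : F ≠ D) (hED : E ≠ D)
    (hEC : E ≠ C) (hDC : D ≠ C) (hBC : B ≠ C) (hAC : A ≠ C) :
    (2 : ℤ) • (∡ A G B) = (2 : ℤ) • (∡ A C B - ∡ E D F - ∡ F E D) := by
  -- split the angle at G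
  have hsplit : ∡ A G F + ∡ F G B = ∡ A G B := oangle_add hAG hFG hBG
  -- inscribed angles
  have h2 : (2 : ℤ) • ∡ A G F = (2 : ℤ) • ∡ A E F :=
    EuclideanGeometry.Sphere.two_zsmul_oangle_eq hA1 hG1 hE1 hF1 hGA hGF hEA hEF
  have h3 : (2 : ℤ) • ∡ F G B = (2 : ℤ) • ∡ F D B :=
    EuclideanGeometry.Sphere.two_zsmul_oangle_eq hF2 hG2 hD2 hB2 hGF hGB hDF hDB
  -- move onto the lines of the triangle
  have h4 : (2 : ℤ) • ∡ A E F = (2 : ℤ) • ∡ C E F :=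
    Collinear.two_zsmul_oangle_eq_left (colP₁ hc₂) hAE hCE
  have h5 : (2 : ℤ) • ∡ F D B = (2 : ℤ) • ∡ F D C :=
    Collinear.two_zsmul_oangle_eq_right (colP₁ (colP₂ hc₁)) hBD hCD
  -- decompose at E and at D
  have hE' : ∡ C E D + ∡ D E F = ∡ C E F := oangle_add hCE hDE hFE
  have hD' : ∡ F D E + ∡ E D C = ∡ F D C := oangle_add hFD hED hCD
  -- angle sum of triangle D C E
  have hπ : ∡ D C E + ∡ C E D + ∡ E D C = (Real.pi : Real.Angle) :=
    oangle_add_oangle_add_oangle_eq_pi hCD hEC hDE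
  have hπ2 : (2 : ℤ) • ∡ D C E + (2 : ℤ) • ∡ C E D + (2 : ℤ) • ∡ E D C = 0 := by
    have h := congrArg (fun θ : Real.Angle => (2 : ℤ) • θ) hπ
    simp only [smul_add] at h
    rw [h, Real.Angle.two_zsmul_coe_pi]
  -- ∡ D C E relates to ∡ B C A
  have h6 : (2 : ℤ) • ∡ D C E = (2 : ℤ) • ∡ B C E :=
    Collinear.two_zsmul_oangle_eq_left hc₁ hDC hBC
  have h7 : (2 : ℤ) • ∡ B C E = (2 : ℤ) • ∡ B C A :=
    Collinear.two_zsmul_oangle_eq_right (colP₂ hc₂) hEC hAC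
  -- reversals
  have r1 : (2 : ℤ) • ∡ A C B = -((2 : ℤ) • ∡ B C A) := by rw [oangle_rev, smul_neg]
  have r2 : (2 : ℤ) • ∡ E D F = -((2 : ℤ) • ∡ F D E) := by rw [oangle_rev, smul_neg]
  have r3 : (2 : ℤ) • ∡ F E D = -((2 : ℤ) • ∡ D E F) := by rw [oangle_rev, smul_neg]
  -- assemble
  have hBCA : (2 : ℤ) • ∡ B C A = -((2 : ℤ) • ∡ C E D + (2 : ℤ) • ∡ E D C) := by
    rw [← h7, ← h6, eq_neg_iff_add_eq_zero, ← add_assoc]; exact hπ2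
  calc (2 : ℤ) • ∡ A G B = (2 : ℤ) • ∡ A G F + (2 : ℤ) • ∡ F G B := by
        rw [← smul_add, hsplit]
    _ = (2 : ℤ) • ∡ C E F + (2 : ℤ) • ∡ F D C := by rw [h2, h3, h4, h5]
    _ = ((2 : ℤ) • ∡ C E D + (2 : ℤ) • ∡ D E F) +
          ((2 : ℤ) • ∡ F D E + (2 : ℤ) • ∡ E D C) := by
        rw [← hE', ← hD', smul_add, smul_add]
    _ = (2 : ℤ) • (∡ A C B - ∡ E D F - ∡ F E D) := by
        rw [smul_sub, smul_sub, r1, r2, r3, hBCA]; abel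

end Aux

/-- Let `A, B, C` form a nondegenerate triangle, `D, E, F` lie on lines
`CB`, `AC`, `AB` respectively, and let `G` be a common point of the circumcircles of
triangles `EAF`, `FBD`, `DCE`.  With directed angles (mod `π`, expressed via doubled
oriented angles) `α = ∡BAC`, `β = ∡CBA`, `γ = ∡ACB`, `α' = ∡EDF`, `β' = ∡FED`,
`γ' = ∡DFE`, we have `∡AGB = γ − α' − β'`, `∡BGC = α − β' − γ'` and
`∡CGA = β − γ' − α'`, all modulo `π`. -/
theorem miquel_point_angles
    {V : Type*} {P : Type*} [NormedAddCommGroup V] [InnerProductSpace ℝ V]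
    [MetricSpace P] [NormedAddTorsor V P]
    [Fact (Module.finrank ℝ V = 2)] [Module.Oriented ℝ V (Fin 2)]
    (A B C D E F G : P)
    (hABC : AffineIndependent ℝ ![A, B, C])
    (hD : D ∈ line[ℝ, C, B]) (hE : E ∈ line[ℝ, A, C]) (hF : F ∈ line[ℝ, A, B])
    (hEAF : AffineIndependent ℝ ![E, A, F])
    (hFBD : AffineIndependent ℝ ![F, B, D])
    (hDCE : AffineIndependent ℝ ![D, C, E])
    (hne : List.Pairwise (· ≠ ·) [A, B, C, D, E, F, G])
    (hG1 : G ∈ (⟨![E, A, F], hEAF⟩ : Simplex ℝ P 2).circumsphere)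
    (hG2 : G ∈ (⟨![F, B, D], hFBD⟩ : Simplex ℝ P 2).circumsphere)
    (hG3 : G ∈ (⟨![D, C, E], hDCE⟩ : Simplex ℝ P 2).circumsphere) :
    (2 : ℤ) • (∡ A G B) = (2 : ℤ) • (∡ A C B - ∡ E D F - ∡ F E D) ∧
    (2 : ℤ) • (∡ B G C) = (2 : ℤ) • (∡ B A C - ∡ F E D - ∡ D F E) ∧
    (2 : ℤ) • (∡ C G A) = (2 : ℤ) • (∡ C B A - ∡ D F E - ∡ E D F) := by
  simp only [List.pairwise_cons] at hne
  obtain ⟨hA, hB, hC, hD', hE', hF', -⟩ := hne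
  have hAB : A ≠ B := hA B (by simp)
  have hAC : A ≠ C := hA C (by simp)
  have hAD : A ≠ D := hA D (by simp)
  have hAE : A ≠ E := hA E (by simp)
  have hAF : A ≠ F := hA F (by simp)
  have hAG : A ≠ G := hA G (by simp)
  have hBC : B ≠ C := hB C (by simp)
  have hBD : B ≠ D := hB D (by simp)
  have hBE : B ≠ E := hB E (by simp)
  have hBF : B ≠ F := hB F (by simp)
  have hBG : B ≠ G := hB G (by simp)
  have hCD : C ≠ D := hC D (by simp)
  have hCE : C ≠ E := hC E (by simp)
  have hCF : C ≠ F := hC F (by simp)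
  have hCG : C ≠ G := hC G (by simp)
  have hDE : D ≠ E := hD' E (by simp)
  have hDF : D ≠ F := hD' F (by simp)
  have hDG : D ≠ G := hD' G (by simp)
  have hEF : E ≠ F := hE' F (by simp)
  have hEG : E ≠ G := hE' G (by simp)
  have hFG : F ≠ G := hF' G (by simp)
  -- collinearity facts
  have hcD : Collinear ℝ ({D, C, B} : Set P) := collinear_insert_of_mem_affineSpan_pair hD
  have hcE : Collinear ℝ ({E, A, C} : Set P) := collinear_insert_of_mem_affineSpan_pair hE
  have hcF : Collinear ℝ ({F, A, B} : Set P) := collinear_insert_of_mem_affineSpan_pair hF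
  -- sphere memberships
  set s₁ := (⟨![E, A, F], hEAF⟩ : Simplex ℝ P 2).circumsphere with hs₁
  set s₂ := (⟨![F, B, D], hFBD⟩ : Simplex ℝ P 2).circumsphere with hs₂
  set s₃ := (⟨![D, C, E], hDCE⟩ : Simplex ℝ P 2).circumsphere with hs₃
  have hE1 : E ∈ s₁ := by
    have := (⟨![E, A, F], hEAF⟩ : Simplex ℝ P 2).mem_circumsphere 0; simpa using this
  have hA1 : A ∈ s₁ := by
    have := (⟨![E, A, F], hEAF⟩ : Simplex ℝ P 2).mem_circumsphere 1; simpa using this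
  have hF1 : F ∈ s₁ := by
    have := (⟨![E, A, F], hEAF⟩ : Simplex ℝ P 2).mem_circumsphere 2; simpa using this
  have hF2 : F ∈ s₂ := by
    have := (⟨![F, B, D], hFBD⟩ : Simplex ℝ P 2).mem_circumsphere 0; simpa using this
  have hB2 : B ∈ s₂ := by
    have := (⟨![F, B, D], hFBD⟩ : Simplex ℝ P 2).mem_circumsphere 1; simpa using this
  have hD2 : D ∈ s₂ := by
    have := (⟨![F, B, D], hFBD⟩ : Simplex ℝ P 2).mem_circumsphere 2; simpa using this
  have hD3 : D ∈ s₃ := by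
    have := (⟨![D, C, E], hDCE⟩ : Simplex ℝ P 2).mem_circumsphere 0; simpa using this
  have hC3 : C ∈ s₃ := by
    have := (⟨![D, C, E], hDCE⟩ : Simplex ℝ P 2).mem_circumsphere 1; simpa using this
  have hE3 : E ∈ s₃ := by
    have := (⟨![D, C, E], hDCE⟩ : Simplex ℝ P 2).mem_circumsphere 2; simpa using this
  refine ⟨?_, ?_, ?_⟩
  · exact miquel_aux A B C D E F G s₁ s₂ hA1 hE1 hF1 hG1 hB2 hD2 hF2 hG2 hcD hcE
      hAG hBG hFG hAG.symm hBG.symm hFG.symm hAE.symm hEF hDF hBD.symm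
      hAE hCE hBD hCD hDE hEF.symm hDF.symm hDE.symm hCE.symm hCD.symm hBC hAC
  · exact miquel_aux B C A E F D G s₂ s₃ hB2 hF2 hD2 hG2 hC3 hE3 hD3 hG3
      hcE (colP₂ hcF)
      hBG hCG hDG hBG.symm hCG.symm hDG.symm hBF.symm hDF.symm hDE.symm hCE.symm
      hBF hAF hCE hAE hEF hDF hDE hEF.symm hAF.symm hAE.symm hAC.symm hAB.symm
  · exact miquel_aux C A B F D E G s₃ s₁ hC3 hD3 hE3 hG3 hA1 hF1 hE1 hG1
      (colP₂ hcF) hcD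
      hCG hAG hEG hCG.symm hAG.symm hEG.symm hCD.symm hDE hEF.symm hAF.symm
      hCD hBD hAF hBF hDF.symm hDE.symm hEF hDF hBD.symm hBF.symm hAB hBC.symm
end

section
/- Let f₁, …, f_n be partially defined continuous real-valued functions of one real variable such that any two of them intersect (in their graphs) at most once, and each f_i is defined on an interval D_i of the same length d > 0. If the union of all the D_i has total measure c·d for some constant c, then the lower envelope of {f₁, …, f_n} has O(n) breakpoints; more precisely, the number of breakpoints is at most a constant (depending only on c) times n. -/
/-!
Cut the line into windows `[k d, (k + 1) d]`. A domain of length `d` meeting a window contains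
one of its endpoints and meets at most three windows, so it suffices to bound the envelope
inside one window linearly in the number of functions meeting it.

Inside a window the functions split into those defined up to its right end and those defined
from its left end. For a family with a common right endpoint, if `f i` is on the envelope at
`x < x'` but not everywhere in between, whatever undercuts `f i` in between is born inside
`(x, x')`, since two functions defined on all of `[x, x']` would cross twice. Charging such a
gap to the first birth inside it is injective, so the family has at most `2 |F|` ties; the
common left endpoint case follows by reflection. Finally, two crossings of the two partial
envelopes are separated by a tie of one of them or by a domain endpoint: otherwise both partial
envelopes are carried by the same two functions throughout, and these would cross twice.
-/

open Set Filter Topology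

namespace LowerEnvelope

variable {ι : Type*}

theorem exists_succ_of_finite {α : Type*} [LinearOrder α] {s : Set α} (hs : s.Finite) {x : α}
    (h : (s ∩ Ioi x).Nonempty) : ∃ x' ∈ s, x < x' ∧ ∀ z ∈ Ioo x x', z ∉ s := by
  obtain ⟨x', ⟨hx's, hxx'⟩, hmin⟩ := exists_min_image (s ∩ Ioi x) id (hs.inter_of_left _) h
  exact ⟨x', hx's, hxx', fun z hz hzs => (hmin z ⟨hzs, hz.1⟩).not_gt hz.2⟩

theorem ncard_le_ncard_add_one_of_forall_inter_Icc {α : Type*} [LinearOrder α] {P Q : Set α}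
    (hQ : Q.Finite) (hPQ : Disjoint P Q) (h : ∀ x ∈ P, ∀ y ∈ P, x < y → (Q ∩ Icc x y).Nonempty) :
    P.ncard ≤ Q.ncard + 1 := by
  have hmono : ∀ x ∈ P, ∀ y ∈ P, x < y → (Q ∩ Iic x).ncard < (Q ∩ Iic y).ncard := by
    intro x hx y hy hxy
    obtain ⟨z, hzQ, hxz, hzy⟩ := h x hx y hy hxy
    refine ncard_lt_ncard ⟨inter_subset_inter_right _ (Iic_subset_Iic.2 hxy.le), fun hsub => ?_⟩
      (hQ.inter_of_left _)
    have hzx : z ≤ x := (hsub ⟨hzQ, hzy⟩).2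
    exact hPQ.notMem_of_mem_left hx (le_antisymm hxz hzx ▸ hzQ)
  calc P.ncard ≤ (↑(Finset.range (Q.ncard + 1)) : Set ℕ).ncard := by
        refine ncard_le_ncard_of_injOn (fun x => (Q ∩ Iic x).ncard)
          (fun x _ => Finset.mem_range.2 (Nat.lt_succ_of_le (ncard_le_ncard inter_subset_left hQ)))
          (fun x hx y hy hxy => ?_) (Finset.finite_toSet _)
        by_contra hne
        rcases lt_or_gt_of_ne hne with hlt | hlt
        · exact (hmono x hx y hy hlt).ne hxy
        · exact (hmono y hy x hx hlt).ne hxy.symm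
    _ = Q.ncard + 1 := by simp

theorem exists_two_zeros_of_nonneg_of_neg_of_nonneg {g : ℝ → ℝ} {a b c : ℝ}
    (hg : ContinuousOn g (Icc a c)) (hab : a ≤ b) (hbc : b ≤ c) (ha : 0 ≤ g a) (hb : g b < 0)
    (hc : 0 ≤ g c) : ∃ r ∈ Icc a c, ∃ s ∈ Icc a c, r < s ∧ g r = 0 ∧ g s = 0 := by
  obtain ⟨r, hr, hgr⟩ :=
    intermediate_value_Icc' hab (hg.mono (Icc_subset_Icc_right hbc)) ⟨hb.le, ha⟩
  obtain ⟨s, hs, hgs⟩ :=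
    intermediate_value_Icc hbc (hg.mono (Icc_subset_Icc_left hab)) ⟨hb.le, hc⟩
  have hrb : r < b := lt_of_le_of_ne hr.2 (by rintro rfl; linarith)
  have hbs : b < s := lt_of_le_of_ne hs.1 (by rintro rfl; linarith)
  exact ⟨r, ⟨hr.1, hr.2.trans hbc⟩, s, ⟨hab.trans hs.1, hs.2⟩, hrb.trans hbs, hgr, hgs⟩

theorem forall_le_of_forall_lt_of_le {G : Finset ι} {g : ι → ℝ → ℝ} {i : ι} {x y : ℝ}
    (hxy : x ≤ y) (hg : ∀ k ∈ G, ContinuousOn (g k) (Icc x y)) (hi : i ∈ G)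
    (hx : ∀ k ∈ G, g i x ≤ g k x)
    (hstrict : ∀ z ∈ Ico x y, (∀ k ∈ G, g i z ≤ g k z) → ∀ k ∈ G, k ≠ i → g i z < g k z) :
    ∀ k ∈ G, g i y ≤ g k y := by
  set s := {z | ∀ k ∈ G, g i z ≤ g k z}
  have hclosed : IsClosed (s ∩ Icc x y) := by
    have : s ∩ Icc x y = Icc x y ∩ ⋂ k ∈ G, {z ∈ Icc x y | g i z ≤ g k z} := by
      ext z
      simp only [s, mem_inter_iff, mem_ofPred_eq, mem_iInter]
      exact ⟨fun h => ⟨h.2, fun k hk => ⟨h.2, h.1 k hk⟩⟩, fun h => ⟨fun k hk => (h.2 k hk).2, h.1⟩⟩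
    rw [this]
    exact isClosed_Icc.inter
      (isClosed_biInter fun k hk => isClosed_Icc.isClosed_le (hg i hi) (hg k hk))
  refine hclosed.Icc_subset_of_forall_mem_nhdsWithin hx (fun z hz => ?_) (right_mem_Icc.2 hxy)
  have hzI : z ∈ Icc x y := Ico_subset_Icc_self hz.2
  have hle : 𝓝[>] z ≤ 𝓝[Icc x y] z := by
    rw [← nhdsWithin_Ioo_eq_nhdsGT hz.2.2]
    exact nhdsWithin_mono _ fun w hw => ⟨hz.2.1.trans hw.1.le, hw.2.le⟩
  refine (eventually_all_finset G).2 fun k hk => ?_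
  rcases eq_or_ne k i with rfl | hki
  · exact Eventually.of_forall fun _ => le_rfl
  have hcont : ContinuousWithinAt (fun w => g k w - g i w) (Icc x y) z :=
    ((hg k hk).sub (hg i hi)) z hzI
  exact hle ((continuousWithinAt_const.eventually_lt hcont
    (sub_pos.2 (hstrict z hz.2 hz.1 k hk hki))).mono fun w hw => (sub_pos.1 hw).le)

theorem mem_Icc_iff_of_notMem {α : Type*} [LinearOrder α] {a b x y z : α} (ha : a ∉ Ioc x y) (hb : b ∉ Ico x y)
    (hz : z ∈ Icc x y) : z ∈ Icc a b ↔ x ∈ Icc a b := by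
  simp only [mem_Icc, mem_Ioc, mem_Ico, not_and, not_le, not_lt] at *
  constructor
  · rintro ⟨h1, h2⟩
    exact ⟨not_lt.1 fun h => (ha h).not_ge (h1.trans hz.2), hz.1.trans h2⟩
  · rintro ⟨h1, h2⟩
    exact ⟨h1.trans hz.1, hz.2.trans (hb h2)⟩

def envelopeSet (F : Finset ι) (D : ι → Set ℝ) (f : ι → ℝ → ℝ) (i : ι) : Set ℝ :=
  {x | x ∈ D i ∧ ∀ k ∈ F, x ∈ D k → f i x ≤ f k x}

def envelopeTies (F : Finset ι) (D : ι → Set ℝ) (f : ι → ℝ → ℝ) : Set ℝ :=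
  {x | ∃ i ∈ F, ∃ j ∈ F, i ≠ j ∧ x ∈ envelopeSet F D f i ∧ x ∈ envelopeSet F D f j}

def MeetAtMostOnce (F : Finset ι) (D : ι → Set ℝ) (f : ι → ℝ → ℝ) : Prop :=
  (F : Set ι).Pairwise fun i j => {x | x ∈ D i ∩ D j ∧ f i x = f j x}.Subsingleton

section Basic

variable {F : Finset ι} {D : ι → Set ℝ} {f : ι → ℝ → ℝ} {i j : ι} {x y : ℝ}

theorem apply_eq_of_mem_envelopeSet (hi : i ∈ F) (hj : j ∈ F) (hxi : x ∈ envelopeSet F D f i)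
    (hxj : x ∈ envelopeSet F D f j) : f i x = f j x :=
  le_antisymm (hxi.2 j hj hxj.1) (hxj.2 i hi hxi.1)

theorem envelopeSet_subset_of_subset {G : Finset ι} (hGF : G ⊆ F) :
    envelopeSet F D f i ⊆ envelopeSet G D f i :=
  fun _ hx => ⟨hx.1, fun k hk => hx.2 k (hGF hk)⟩

theorem envelopeTies_inter_subset (W : Set ℝ) :
    envelopeTies F D f ∩ W ⊆ envelopeTies F (fun i => D i ∩ W) f := by
  have h : ∀ i, envelopeSet F D f i ∩ W ⊆ envelopeSet F (fun i => D i ∩ W) f i :=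
    fun _ x hx => ⟨⟨hx.1.1, hx.2⟩, fun k hk hxk => hx.1.2 k hk hxk.1⟩
  rintro x ⟨⟨i, hi, j, hj, hij, hxi, hxj⟩, hxW⟩
  exact ⟨i, hi, j, hj, hij, h i ⟨hxi, hxW⟩, h j ⟨hxj, hxW⟩⟩

namespace MeetAtMostOnce

theorem mono {G : Finset ι} {D' : ι → Set ℝ} (h : MeetAtMostOnce F D f) (hGF : G ⊆ F)
    (hD : ∀ i ∈ G, D' i ⊆ D i) : MeetAtMostOnce G D' f :=
  fun i hi j hj hij => (h (hGF hi) (hGF hj) hij).anti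
    fun _ hx => ⟨⟨hD i hi hx.1.1, hD j hj hx.1.2⟩, hx.2⟩

theorem eq_of_mem_envelopeSet (h : MeetAtMostOnce F D f) (hi : i ∈ F) (hj : j ∈ F) (hij : i ≠ j)
    (hxi : x ∈ envelopeSet F D f i) (hxj : x ∈ envelopeSet F D f j)
    (hyi : y ∈ envelopeSet F D f i) (hyj : y ∈ envelopeSet F D f j) : x = y :=
  h hi hj hij ⟨⟨hxi.1, hxj.1⟩, apply_eq_of_mem_envelopeSet hi hj hxi hxj⟩
    ⟨⟨hyi.1, hyj.1⟩, apply_eq_of_mem_envelopeSet hi hj hyi hyj⟩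

theorem envelopeTies_finite (h : MeetAtMostOnce F D f) : (envelopeTies F D f).Finite := by
  refine (F.finite_toSet.biUnion fun i hi => F.finite_toSet.biUnion fun j hj =>
    (?_ : {x | i ≠ j ∧ x ∈ D i ∩ D j ∧ f i x = f j x}.Finite)).subset ?_
  · by_cases hij : i = j
    · simp [hij]
    · exact (h hi hj hij).finite.subset fun x hx => hx.2
  · rintro x ⟨i, hi, j, hj, hij, hxi, hxj⟩
    exact mem_biUnion hi (mem_biUnion hj
      ⟨hij, ⟨hxi.1, hxj.1⟩, apply_eq_of_mem_envelopeSet hi hj hxi hxj⟩)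

end MeetAtMostOnce

end Basic

structure IsBrokenGap (F : Finset ι) (D : ι → Set ℝ) (f : ι → ℝ → ℝ) (i : ι) (x x' : ℝ) :
    Prop where
  left_mem : x ∈ envelopeTies F D f ∩ envelopeSet F D f i
  right_mem : x' ∈ envelopeTies F D f ∩ envelopeSet F D f i
  lt : x < x'
  no_tie_between : ∀ z ∈ Ioo x x', z ∉ envelopeTies F D f ∩ envelopeSet F D f i
  not_subset : ¬ Icc x x' ⊆ envelopeSet F D f i

def brokenGaps (F : Finset ι) (D : ι → Set ℝ) (f : ι → ℝ → ℝ) : Set (ι × ℝ × ℝ) :=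
  {g | g.1 ∈ F ∧ IsBrokenGap F D f g.1 g.2.1 g.2.2}

theorem envelopeTies_subset_sSup_image_union {F : Finset ι} {D : ι → Set ℝ} {f : ι → ℝ → ℝ}
    (hmeet : MeetAtMostOnce F D f) :
    envelopeTies F D f ⊆ (fun i => sSup (envelopeTies F D f ∩ envelopeSet F D f i)) '' F ∪
      (fun g => g.2.1) '' brokenGaps F D f := by
  intro x hx
  have key : ∀ k ∈ F, x ∈ envelopeSet F D f k →
      x ∈ (fun i => sSup (envelopeTies F D f ∩ envelopeSet F D f i)) '' F ∪
        (fun g => g.2.1) '' brokenGaps F D f ∨ ∃ x' > x, Icc x x' ⊆ envelopeSet F D f k := by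
    intro k hk hxk
    by_cases hU : (envelopeTies F D f ∩ envelopeSet F D f k ∩ Ioi x).Nonempty
    · obtain ⟨x', hx'U, hxx', hgap⟩ :=
        exists_succ_of_finite (hmeet.envelopeTies_finite.inter_of_left _) hU
      by_cases hsub : Icc x x' ⊆ envelopeSet F D f k
      · exact Or.inr ⟨x', hxx', hsub⟩
      · exact Or.inl (Or.inr ⟨(k, x, x'), ⟨hk, ⟨hx, hxk⟩, hx'U, hxx', hgap, hsub⟩, rfl⟩)
    · refine Or.inl (Or.inl ⟨k, hk, IsGreatest.csSup_eq ⟨⟨hx, hxk⟩, fun y hy => ?_⟩⟩)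
      exact not_lt.1 fun hxy => hU ⟨y, hy, hxy⟩
  obtain ⟨i, hi, j, hj, hij, hxi, hxj⟩ := hx
  obtain h | ⟨x₁, hx₁, hsub₁⟩ := key i hi hxi
  · exact h
  obtain h | ⟨x₂, hx₂, hsub₂⟩ := key j hj hxj
  · exact h
  have hm : x < min x₁ x₂ := lt_min hx₁ hx₂
  exact absurd (hmeet.eq_of_mem_envelopeSet hi hj hij hxi hxj
    (hsub₁ ⟨hm.le, min_le_left _ _⟩) (hsub₂ ⟨hm.le, min_le_right _ _⟩)) hm.ne

section CommonRightEndpoint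

variable {F : Finset ι} {A B : ι → ℝ} {f : ι → ℝ → ℝ} {i j : ι} {x x' y : ℝ}

local notation "𝓓" => fun i => Icc (A i) (B i)

theorem mem_Ioc_of_lt_of_mem_envelopeSet (hf : ∀ i ∈ F, ContinuousOn (f i) (Icc (A i) (B i)))
    (hmeet : MeetAtMostOnce F 𝓓 f) (hB : ∀ i ∈ F, ∀ j ∈ F, B i = B j) (hi : i ∈ F) (hj : j ∈ F)
    (hx : x ∈ envelopeSet F 𝓓 f i) (hx' : x' ∈ envelopeSet F 𝓓 f i) (hy : y ∈ Ioo x x')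
    (hyj : y ∈ Icc (A j) (B j)) (hlt : f j y < f i y) : A j ∈ Ioc x y := by
  refine ⟨lt_of_not_ge fun hAx => ?_, hyj.1⟩
  have hij : i ≠ j := by rintro rfl; exact lt_irrefl _ hlt
  have hIi : Icc x x' ⊆ Icc (A i) (B i) := Icc_subset_Icc hx.1.1 hx'.1.2
  have hIj : Icc x x' ⊆ Icc (A j) (B j) := Icc_subset_Icc hAx (hx'.1.2.trans (hB i hi j hj).le)
  have hxx' : x ≤ x' := hy.1.le.trans hy.2.le
  obtain ⟨r, hr, s, hs, hrs, hgr, hgs⟩ := exists_two_zeros_of_nonneg_of_neg_of_nonneg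
    (g := fun z => f j z - f i z) (((hf j hj).mono hIj).sub ((hf i hi).mono hIi)) hy.1.le hy.2.le
    (sub_nonneg.2 (hx.2 j hj (hIj (left_mem_Icc.2 hxx')))) (sub_neg.2 hlt)
    (sub_nonneg.2 (hx'.2 j hj (hIj (right_mem_Icc.2 hxx'))))
  exact hrs.ne (hmeet hi hj hij ⟨⟨hIi hr, hIj hr⟩, (sub_eq_zero.1 hgr).symm⟩
    ⟨⟨hIi hs, hIj hs⟩, (sub_eq_zero.1 hgs).symm⟩)

theorem IsBrokenGap.sInf_mem (hf : ∀ i ∈ F, ContinuousOn (f i) (Icc (A i) (B i)))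
    (hmeet : MeetAtMostOnce F 𝓓 f) (hB : ∀ i ∈ F, ∀ j ∈ F, B i = B j) (hi : i ∈ F)
    (hg : IsBrokenGap F 𝓓 f i x x') : sInf (A '' F ∩ Ioo x x') ∈ A '' F ∩ Ioo x x' := by
  have hx := hg.left_mem.2
  have hx' := hg.right_mem.2
  obtain ⟨y, hy, hyi⟩ := Set.not_subset.1 hg.not_subset
  have hxy : x < y := lt_of_le_of_ne hy.1 (by rintro rfl; exact hyi hx)
  have hyx' : y < x' := lt_of_le_of_ne hy.2 (by rintro rfl; exact hyi hx')
  obtain ⟨k, hk, hyk, hlt⟩ : ∃ k ∈ F, y ∈ Icc (A k) (B k) ∧ f k y < f i y := by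
    by_contra! h
    exact hyi ⟨⟨hx.1.1.trans hy.1, hy.2.trans hx'.1.2⟩, h⟩
  have hAk := mem_Ioc_of_lt_of_mem_envelopeSet hf hmeet hB hi hk hx hx' ⟨hxy, hyx'⟩ hyk hlt
  exact Set.Nonempty.csInf_mem ⟨A k, mem_image_of_mem A hk, hAk.1, hAk.2.trans_lt hyx'⟩
    ((F.finite_toSet.image A).inter_of_left _)

theorem IsBrokenGap.mem_Ioc (hf : ∀ i ∈ F, ContinuousOn (f i) (Icc (A i) (B i)))
    (hmeet : MeetAtMostOnce F 𝓓 f) (hB : ∀ i ∈ F, ∀ j ∈ F, B i = B j) (hi : i ∈ F) (hj : j ∈ F)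
    (hg : IsBrokenGap F 𝓓 f i x x') {z : ℝ} (hz : z ∈ Ioo x x')
    (hzj : z ∈ envelopeTies F 𝓓 f ∩ envelopeSet F 𝓓 f j) : A j ∈ Ioc x z := by
  have hx := hg.left_mem.2
  have hx' := hg.right_mem.2
  have hzi : z ∉ envelopeSet F 𝓓 f i := fun h => hg.no_tie_between z hz ⟨hzj.1, h⟩
  have hzD : z ∈ Icc (A i) (B i) := ⟨hx.1.1.trans hz.1.le, hz.2.le.trans hx'.1.2⟩
  refine mem_Ioc_of_lt_of_mem_envelopeSet hf hmeet hB hi hj hx hx' hz hzj.2.1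
    (lt_of_le_of_ne (hzj.2.2 i hi hzD) fun h => hzi ⟨hzD, fun k hk hzk => ?_⟩)
  rw [← h]
  exact hzj.2.2 k hk hzk

theorem IsBrokenGap.eq_of_sInf_eq (hf : ∀ i ∈ F, ContinuousOn (f i) (Icc (A i) (B i)))
    (hmeet : MeetAtMostOnce F 𝓓 f) (hB : ∀ i ∈ F, ∀ j ∈ F, B i = B j) (hi : i ∈ F) (hj : j ∈ F)
    {z z' : ℝ} (hg : IsBrokenGap F 𝓓 f i x x') (hg' : IsBrokenGap F 𝓓 f j z z') (hxz : x ≤ z)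
    (hb : sInf (A '' F ∩ Ioo x x') = sInf (A '' F ∩ Ioo z z')) : i = j ∧ x = z ∧ x' = z' := by
  obtain hxz | rfl := hxz.lt_or_eq
  · have hbx := hg.sInf_mem hf hmeet hB hi
    have hbz := hg'.sInf_mem hf hmeet hB hj
    rw [← hb] at hbz
    have hz : z ∈ Ioo x x' := ⟨hxz, hbz.2.1.trans hbx.2.2⟩
    have hAj := hg.mem_Ioc hf hmeet hB hi hj hz hg'.left_mem
    have : sInf (A '' F ∩ Ioo x x') ≤ A j :=
      csInf_le ((F.finite_toSet.image A).inter_of_left _).bddBelow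
        ⟨mem_image_of_mem A hj, hAj.1, hAj.2.trans_lt hz.2⟩
    linarith [hbz.2.1, hAj.2]
  obtain hlt | rfl | hlt := lt_trichotomy x' z'
  · have hAi := hg'.mem_Ioc hf hmeet hB hj hi ⟨hg.lt, hlt⟩ hg.right_mem
    exact absurd hg.left_mem.2.1.1 (not_le.2 hAi.1)
  · refine ⟨by_contra fun hij => hg.lt.ne ?_, rfl, rfl⟩
    exact hmeet.eq_of_mem_envelopeSet hi hj hij hg.left_mem.2 hg'.left_mem.2 hg.right_mem.2
      hg'.right_mem.2
  · have hAj := hg.mem_Ioc hf hmeet hB hi hj ⟨hg'.lt, hlt⟩ hg'.right_mem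
    exact absurd hg'.left_mem.2.1.1 (not_le.2 hAj.1)

theorem ncard_envelopeTies_le_of_right_eq (hf : ∀ i ∈ F, ContinuousOn (f i) (Icc (A i) (B i)))
    (hmeet : MeetAtMostOnce F 𝓓 f) (hB : ∀ i ∈ F, ∀ j ∈ F, B i = B j) :
    (envelopeTies F 𝓓 f).ncard ≤ 2 * F.card := by
  set charge : ι × ℝ × ℝ → ℝ := fun g => sInf (A '' F ∩ Ioo g.2.1 g.2.2)
  have hmaps : MapsTo charge (brokenGaps F 𝓓 f) (A '' F) :=
    fun g hg => (hg.2.sInf_mem hf hmeet hB hg.1).1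
  have hinj : InjOn charge (brokenGaps F 𝓓 f) := by
    rintro ⟨k, u, v⟩ ⟨hk, hg⟩ ⟨k', u', v'⟩ ⟨hk', hg'⟩ hb
    obtain huu' | hu'u := le_total u u'
    · obtain ⟨rfl, rfl, rfl⟩ := hg.eq_of_sInf_eq hf hmeet hB hk hk' hg' huu' hb
      rfl
    · obtain ⟨rfl, rfl, rfl⟩ := hg'.eq_of_sInf_eq hf hmeet hB hk' hk hg hu'u hb.symm
      rfl
  have hAF : (A '' F).Finite := F.finite_toSet.image A
  have hfin : (brokenGaps F 𝓓 f).Finite := Finite.of_injOn hmaps hinj hAF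
  have hgaps : (brokenGaps F 𝓓 f).ncard ≤ F.card :=
    (ncard_le_ncard_of_injOn charge hmaps hinj hAF).trans
      ((ncard_image_le F.finite_toSet).trans_eq (ncard_coe_finset F))
  calc (envelopeTies F 𝓓 f).ncard
      ≤ ((fun i => sSup (envelopeTies F 𝓓 f ∩ envelopeSet F 𝓓 f i)) '' F ∪
          (fun g => g.2.1) '' brokenGaps F 𝓓 f).ncard :=
        ncard_le_ncard (envelopeTies_subset_sSup_image_union hmeet)
          ((F.finite_toSet.image _).union (hfin.image _))
    _ ≤ F.card + F.card := (ncard_union_le _ _).trans (add_le_add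
        ((ncard_image_le F.finite_toSet).trans_eq (ncard_coe_finset F))
        ((ncard_image_le hfin).trans hgaps))
    _ = 2 * F.card := (two_mul _).symm

end CommonRightEndpoint

section Reflection

variable {F : Finset ι} {A B : ι → ℝ} {f : ι → ℝ → ℝ}

theorem envelopeTies_comp_neg :
    envelopeTies F (fun i => Icc (-B i) (-A i)) (fun i x => f i (-x)) =
      Neg.neg ⁻¹' envelopeTies F (fun i => Icc (A i) (B i)) f := by
  have h : ∀ i, envelopeSet F (fun i => Icc (-B i) (-A i)) (fun i x => f i (-x)) i =
      Neg.neg ⁻¹' envelopeSet F (fun i => Icc (A i) (B i)) f i := by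
    intro i
    ext x
    simp only [envelopeSet, mem_ofPred_eq, mem_preimage, ← neg_mem_Icc_iff]
  ext x
  simp only [envelopeTies, h, mem_ofPred_eq, mem_preimage]

theorem ncard_envelopeTies_le_of_left_eq (hf : ∀ i ∈ F, ContinuousOn (f i) (Icc (A i) (B i)))
    (hmeet : MeetAtMostOnce F (fun i => Icc (A i) (B i)) f) (hA : ∀ i ∈ F, ∀ j ∈ F, A i = A j) :
    (envelopeTies F (fun i => Icc (A i) (B i)) f).ncard ≤ 2 * F.card := by
  have h := ncard_envelopeTies_le_of_right_eq (A := fun i => -B i) (B := fun i => -A i)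
    (f := fun i x => f i (-x))
    (fun i hi => (hf i hi).comp continuous_neg.continuousOn fun _ hx => neg_mem_Icc_iff.2 hx)
    (fun i hi j hj hij x hx y hy => neg_injective <| hmeet hi hj hij
      ⟨⟨neg_mem_Icc_iff.2 hx.1.1, neg_mem_Icc_iff.2 hx.1.2⟩, hx.2⟩
      ⟨⟨neg_mem_Icc_iff.2 hy.1.1, neg_mem_Icc_iff.2 hy.1.2⟩, hy.2⟩)
    (fun i hi j hj => by rw [hA i hi j hj])
  rwa [envelopeTies_comp_neg, ncard_preimage_of_injective_subset_range neg_injective (by simp)]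
    at h

end Reflection

def crossTies (R L : Finset ι) (D : ι → Set ℝ) (f : ι → ℝ → ℝ) : Set ℝ :=
  {x | ∃ i ∈ R, ∃ j ∈ L, x ∈ envelopeSet R D f i ∧ x ∈ envelopeSet L D f j ∧ f i x = f j x}

def cutPoints (R L : Finset ι) (A B : ι → ℝ) (f : ι → ℝ → ℝ) : Set ℝ :=
  envelopeTies R (fun i => Icc (A i) (B i)) f ∪ envelopeTies L (fun i => Icc (A i) (B i)) f ∪
    (A '' (↑R ∪ ↑L) ∪ B '' (↑R ∪ ↑L))

theorem envelopeTies_subset_union {F R L : Finset ι} {D : ι → Set ℝ} {f : ι → ℝ → ℝ}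
    (hR : R ⊆ F) (hL : L ⊆ F) (hRL : ∀ i ∈ F, i ∈ R ∨ i ∈ L) :
    envelopeTies F D f ⊆ envelopeTies R D f ∪ envelopeTies L D f ∪ crossTies R L D f := by
  rintro x ⟨i, hi, j, hj, hij, hxi, hxj⟩
  have heq := apply_eq_of_mem_envelopeSet hi hj hxi hxj
  rcases hRL i hi with hiR | hiL <;> rcases hRL j hj with hjR | hjL
  · exact Or.inl (Or.inl ⟨i, hiR, j, hjR, hij, envelopeSet_subset_of_subset hR hxi,
      envelopeSet_subset_of_subset hR hxj⟩)
  · exact Or.inr ⟨i, hiR, j, hjL, envelopeSet_subset_of_subset hR hxi,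
      envelopeSet_subset_of_subset hL hxj, heq⟩
  · exact Or.inr ⟨j, hjR, i, hiL, envelopeSet_subset_of_subset hR hxj,
      envelopeSet_subset_of_subset hL hxi, heq.symm⟩
  · exact Or.inl (Or.inr ⟨i, hiL, j, hjL, hij, envelopeSet_subset_of_subset hL hxi,
      envelopeSet_subset_of_subset hL hxj⟩)

section Merge

variable {F R L : Finset ι} {A B : ι → ℝ} {f : ι → ℝ → ℝ} {i : ι} {x y : ℝ}

local notation "𝓓" => fun i => Icc (A i) (B i)

theorem mem_envelopeSet_of_forall_notMem (hf : ∀ k ∈ F, ContinuousOn (f k) (Icc (A k) (B k)))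
    (hxy : x ≤ y) (hA : ∀ k ∈ F, A k ∉ Ioc x y) (hB : ∀ k ∈ F, B k ∉ Ico x y)
    (hT : ∀ z ∈ Ico x y, z ∉ envelopeTies F 𝓓 f) (hi : i ∈ F) (hx : x ∈ envelopeSet F 𝓓 f i) :
    y ∈ envelopeSet F 𝓓 f i := by
  have halive : ∀ k ∈ F, ∀ z ∈ Icc x y, z ∈ Icc (A k) (B k) ↔ x ∈ Icc (A k) (B k) :=
    fun k hk _ => mem_Icc_iff_of_notMem (hA k hk) (hB k hk)
  set G := F.filter fun k => x ∈ Icc (A k) (B k)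
  have hG : ∀ k ∈ F, ∀ z ∈ Icc x y, z ∈ Icc (A k) (B k) → k ∈ G :=
    fun k hk z hz hzk => Finset.mem_filter.2 ⟨hk, (halive k hk z hz).1 hzk⟩
  have hmin : ∀ k ∈ G, ∀ z ∈ Icc x y, (∀ k' ∈ G, f k z ≤ f k' z) → z ∈ envelopeSet F 𝓓 f k :=
    fun k hk z hz h => ⟨(halive k (Finset.mem_filter.1 hk).1 z hz).2 (Finset.mem_filter.1 hk).2,
      fun k' hk' hzk' => h k' (hG k' hk' z hz hzk')⟩
  have hiG := hG i hi x (left_mem_Icc.2 hxy) hx.1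
  refine hmin i hiG y (right_mem_Icc.2 hxy) (forall_le_of_forall_lt_of_le hxy
    (fun k hk => (hf k (Finset.mem_filter.1 hk).1).mono fun z hz =>
      (halive k (Finset.mem_filter.1 hk).1 z hz).2 (Finset.mem_filter.1 hk).2)
    hiG (fun k hk => hx.2 k (Finset.mem_filter.1 hk).1 (Finset.mem_filter.1 hk).2) ?_)
  intro z hz hzi k hk hki
  refine lt_of_le_of_ne (hzi k hk) fun h => hT z hz ⟨i, hi, k, (Finset.mem_filter.1 hk).1,
    hki.symm, hmin i hiG z (Ico_subset_Icc_self hz) hzi, hmin k hk z (Ico_subset_Icc_self hz)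
      fun k' hk' => h.symm.le.trans (hzi k' hk')⟩

theorem cutPoints_inter_Icc_nonempty (hf : ∀ i ∈ F, ContinuousOn (f i) (Icc (A i) (B i)))
    (hmeet : MeetAtMostOnce F 𝓓 f) (hR : R ⊆ F) (hL : L ⊆ F) (hRL : Disjoint R L)
    (hx : x ∈ crossTies R L 𝓓 f) (hy : y ∈ crossTies R L 𝓓 f) (hxy : x < y) :
    (cutPoints R L A B f ∩ Icc x y).Nonempty := by
  by_contra hcut
  have hC : ∀ z ∈ Icc x y, z ∉ cutPoints R L A B f := fun z hz hzC => hcut ⟨z, hzC, hz⟩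
  have persist : ∀ G ⊆ F, envelopeTies G 𝓓 f ⊆ cutPoints R L A B f →
      (∀ k ∈ G, A k ∈ cutPoints R L A B f ∧ B k ∈ cutPoints R L A B f) →
      ∀ k ∈ G, x ∈ envelopeSet G 𝓓 f k → y ∈ envelopeSet G 𝓓 f k :=
    fun G hG hT hAB _ hk => mem_envelopeSet_of_forall_notMem (fun k hk => hf k (hG hk)) hxy.le
      (fun k hk h => hC _ (Ioc_subset_Icc_self h) (hAB k hk).1)
      (fun k hk h => hC _ (Ico_subset_Icc_self h) (hAB k hk).2)
      (fun z hz h => hC z (Ico_subset_Icc_self hz) (hT h)) hk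
  have hAB : ∀ k ∈ (↑R ∪ ↑L : Set ι), A k ∈ cutPoints R L A B f ∧ B k ∈ cutPoints R L A B f :=
    fun k hk => ⟨Or.inr (Or.inl ⟨k, hk, rfl⟩), Or.inr (Or.inr ⟨k, hk, rfl⟩)⟩
  have hyC : y ∉ cutPoints R L A B f := hC y (right_mem_Icc.2 hxy.le)
  obtain ⟨i, hi, j, hj, hxi, hxj, hxe⟩ := hx
  obtain ⟨i', hi', j', hj', hyi', hyj', hye⟩ := hy
  have hyi := persist R hR (fun z hz => Or.inl (Or.inl hz))
    (fun k hk => hAB k (Or.inl hk)) i hi hxi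
  have hyj := persist L hL (fun z hz => Or.inl (Or.inr hz))
    (fun k hk => hAB k (Or.inr hk)) j hj hxj
  obtain rfl : i = i' := by_contra fun h => hyC (Or.inl (Or.inl ⟨i, hi, i', hi', h, hyi, hyi'⟩))
  obtain rfl : j = j' := by_contra fun h => hyC (Or.inl (Or.inr ⟨j, hj, j', hj', h, hyj, hyj'⟩))
  exact hxy.ne (hmeet (hR hi) (hL hj) (fun h => Finset.disjoint_left.1 hRL hi (h ▸ hj))
    ⟨⟨hxi.1, hxj.1⟩, hxe⟩ ⟨⟨hyi.1, hyj.1⟩, hye⟩)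

theorem ncard_cutPoints_le (hR : R ⊆ F) (hL : L ⊆ F) :
    (cutPoints R L A B f).ncard ≤
      (envelopeTies R 𝓓 f).ncard + (envelopeTies L 𝓓 f).ncard + 2 * F.card := by
  have hRL : (↑R ∪ ↑L : Set ι).Finite := R.finite_toSet.union L.finite_toSet
  have himage : ∀ g : ι → ℝ, (g '' (↑R ∪ ↑L)).ncard ≤ F.card := fun g =>
    (ncard_image_le hRL).trans
      ((ncard_le_ncard (union_subset hR hL) F.finite_toSet).trans_eq (ncard_coe_finset F))
  calc (cutPoints R L A B f).ncard
      ≤ ((envelopeTies R 𝓓 f).ncard + (envelopeTies L 𝓓 f).ncard) + (F.card + F.card) :=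
        (ncard_union_le _ _).trans (add_le_add (ncard_union_le _ _)
          ((ncard_union_le _ _).trans (add_le_add (himage A) (himage B))))
    _ = _ := by ring

theorem ncard_envelopeTies_le_two_mul_ncard_cutPoints_add_one
    (hf : ∀ i ∈ F, ContinuousOn (f i) (Icc (A i) (B i))) (hmeet : MeetAtMostOnce F 𝓓 f)
    (hR : R ⊆ F) (hL : L ⊆ F) (hRL : Disjoint R L) (hcover : ∀ i ∈ F, i ∈ R ∨ i ∈ L) :
    (envelopeTies F 𝓓 f).ncard ≤ 2 * (cutPoints R L A B f).ncard + 1 := by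
  set C := cutPoints R L A B f
  have hRL' : (↑R ∪ ↑L : Set ι).Finite := R.finite_toSet.union L.finite_toSet
  have hCfin : C.Finite :=
    ((hmeet.mono hR fun _ _ => subset_rfl).envelopeTies_finite.union
      (hmeet.mono hL fun _ _ => subset_rfl).envelopeTies_finite).union
      ((hRL'.image A).union (hRL'.image B))
  have hcross : envelopeTies F 𝓓 f \ C ⊆ crossTies R L 𝓓 f := fun x hx =>
    (envelopeTies_subset_union hR hL hcover hx.1).resolve_left fun h => hx.2 (Or.inl h)
  have hsep : (envelopeTies F 𝓓 f \ C).ncard ≤ C.ncard + 1 :=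
    ncard_le_ncard_add_one_of_forall_inter_Icc hCfin disjoint_sdiff_left fun x hx y hy hxy =>
      cutPoints_inter_Icc_nonempty hf hmeet hR hL hRL (hcross hx) (hcross hy) hxy
  calc (envelopeTies F 𝓓 f).ncard
      = (envelopeTies F 𝓓 f ∩ C).ncard + (envelopeTies F 𝓓 f \ C).ncard :=
        (ncard_inter_add_ncard_sdiff_eq_ncard _ C hmeet.envelopeTies_finite).symm
    _ ≤ C.ncard + (C.ncard + 1) := add_le_add (ncard_le_ncard inter_subset_right hCfin) hsep
    _ = 2 * C.ncard + 1 := by ring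

end Merge

theorem ncard_envelopeTies_inter_Icc_le {F : Finset ι} {A B : ι → ℝ} {f : ι → ℝ → ℝ}
    (hf : ∀ i ∈ F, ContinuousOn (f i) (Icc (A i) (B i)))
    (hmeet : MeetAtMostOnce F (fun i => Icc (A i) (B i)) f) {p q : ℝ}
    (hpq : ∀ i ∈ F, q ≤ B i ∨ A i ≤ p) :
    (envelopeTies F (fun i => Icc (A i) (B i)) f ∩ Icc p q).ncard ≤ 8 * F.card + 1 := by
  classical
  -- on `[p, q]` the domains in `R` all end at `q` and those in `L` all start at `p`
  set A' : ι → ℝ := fun i => max (A i) p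
  set B' : ι → ℝ := fun i => min (B i) q
  set R := F.filter fun i => q ≤ B i
  set L := F.filter fun i => ¬ q ≤ B i
  have hR : R ⊆ F := Finset.filter_subset _ _
  have hL : L ⊆ F := Finset.filter_subset _ _
  have hsub : ∀ i, Icc (A' i) (B' i) ⊆ Icc (A i) (B i) :=
    fun i => Icc_subset_Icc (le_max_left _ _) (min_le_left _ _)
  have hf' : ∀ i ∈ F, ContinuousOn (f i) (Icc (A' i) (B' i)) :=
    fun i hi => (hf i hi).mono (hsub i)
  have hmeet' : MeetAtMostOnce F (fun i => Icc (A' i) (B' i)) f :=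
    hmeet.mono subset_rfl fun i _ => hsub i
  have hTR : (envelopeTies R (fun i => Icc (A' i) (B' i)) f).ncard ≤ 2 * R.card :=
    ncard_envelopeTies_le_of_right_eq (fun i hi => hf' i (hR hi))
      (hmeet'.mono hR fun _ _ => subset_rfl) fun i hi j hj => by
        simp only [B', min_eq_right (Finset.mem_filter.1 hi).2,
          min_eq_right (Finset.mem_filter.1 hj).2]
  have hA' : ∀ i ∈ L, A' i = p := fun i hi =>
    max_eq_right ((hpq i (Finset.mem_filter.1 hi).1).resolve_left (Finset.mem_filter.1 hi).2)
  have hTL : (envelopeTies L (fun i => Icc (A' i) (B' i)) f).ncard ≤ 2 * L.card :=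
    ncard_envelopeTies_le_of_left_eq (fun i hi => hf' i (hL hi))
      (hmeet'.mono hL fun _ _ => subset_rfl) fun i hi j hj => by rw [hA' i hi, hA' j hj]
  have hwin : envelopeTies F (fun i => Icc (A i) (B i)) f ∩ Icc p q ⊆
      envelopeTies F (fun i => Icc (A' i) (B' i)) f := by
    refine (envelopeTies_inter_subset _).trans_eq ?_
    simp only [Icc_inter_Icc]
    rfl
  have hC := ncard_cutPoints_le (A := A') (B := B') (f := f) hR hL
  have hRL : R.card + L.card = F.card := Finset.card_filter_add_card_filter_not _
  calc _ ≤ (envelopeTies F (fun i => Icc (A' i) (B' i)) f).ncard :=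
        ncard_le_ncard hwin hmeet'.envelopeTies_finite
    _ ≤ 2 * (cutPoints R L A' B' f).ncard + 1 :=
        ncard_envelopeTies_le_two_mul_ncard_cutPoints_add_one hf' hmeet' hR hL
          (Finset.disjoint_filter_filter_not _ _ _) fun i hi => (em (q ≤ B i)).imp
            (fun h => Finset.mem_filter.2 ⟨hi, h⟩) fun h => Finset.mem_filter.2 ⟨hi, h⟩
    _ ≤ 8 * F.card + 1 := by omega

theorem ncard_setOf_exists_eq_or_eq_le {α : Type*} [Fintype ι] (a b : ι → α) :
    {x | ∃ i, x = a i ∨ x = b i}.ncard ≤ 2 * Fintype.card ι := by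
  classical
  have hsub : {x | ∃ i, x = a i ∨ x = b i} ⊆ ↑(Finset.univ.image a ∪ Finset.univ.image b) := by
    rintro x ⟨i, rfl | rfl⟩ <;> simp
  calc _ ≤ (Finset.univ.image a ∪ Finset.univ.image b).card :=
        (ncard_le_ncard hsub (Finset.finite_toSet _)).trans_eq (ncard_coe_finset _)
    _ ≤ Fintype.card ι + Fintype.card ι :=
        (Finset.card_union_le _ _).trans (add_le_add Finset.card_image_le Finset.card_image_le)
    _ = 2 * Fintype.card ι := (two_mul _).symm

section EqualLength

variable [Fintype ι] {a : ι → ℝ} {d : ℝ} {f : ι → ℝ → ℝ}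

noncomputable def windowFamily (a : ι → ℝ) (d : ℝ) (k : ℤ) : Finset ι :=
  Finset.univ.filter fun i => a i ≤ (k + 1) * d ∧ k * d ≤ a i + d

theorem mem_Icc_floor_of_mem_windowFamily (hd : 0 < d) {k : ℤ} {i : ι}
    (hi : i ∈ windowFamily a d k) : k ∈ Finset.Icc (⌊a i / d⌋ - 1) (⌊a i / d⌋ + 1) := by
  obtain ⟨h1, h2⟩ := (Finset.mem_filter.1 hi).2
  have hle : ⌊a i / d⌋ ≤ k + 1 := by
    have : (⌊a i / d⌋ : ℝ) ≤ k + 1 := (Int.floor_le _).trans ((div_le_iff₀ hd).2 h1)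
    exact_mod_cast this
  have hge : k - 1 ≤ ⌊a i / d⌋ := Int.le_floor.2 (by push_cast; rw [le_div_iff₀ hd]; linarith)
  exact Finset.mem_Icc.2 ⟨by omega, by omega⟩

theorem envelopeTies_subset_biUnion_windowFamily (hd : 0 < d) :
    envelopeTies Finset.univ (fun i => Icc (a i) (a i + d)) f ⊆
      ⋃ k ∈ Finset.univ.biUnion fun i => Finset.Icc (⌊a i / d⌋ - 1) (⌊a i / d⌋ + 1),
        envelopeTies (windowFamily a d k) (fun i => Icc (a i) (a i + d)) f ∩
          Icc (k * d) ((k + 1) * d) := by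
  rintro x ⟨i, -, j, -, hij, hxi, hxj⟩
  set k := ⌊x / d⌋
  have hk : x ∈ Icc (k * d) ((k + 1) * d) :=
    ⟨(le_div_iff₀ hd).1 (Int.floor_le _), ((div_lt_iff₀ hd).1 (Int.lt_floor_add_one _)).le⟩
  have hmem : ∀ l, x ∈ Icc (a l) (a l + d) → l ∈ windowFamily a d k :=
    fun l hl => Finset.mem_filter.2 ⟨Finset.mem_univ _, hl.1.trans hk.2, hk.1.trans hl.2⟩
  refine mem_iUnion₂.2 ⟨k, Finset.mem_biUnion.2 ⟨i, Finset.mem_univ _,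
    mem_Icc_floor_of_mem_windowFamily hd (hmem i hxi.1)⟩, ⟨i, hmem i hxi.1, j, hmem j hxj.1, hij,
    envelopeSet_subset_of_subset (Finset.subset_univ _) hxi,
    envelopeSet_subset_of_subset (Finset.subset_univ _) hxj⟩, hk⟩

theorem ncard_envelopeTies_le_of_equal_length (hd : 0 < d)
    (hf : ∀ i, ContinuousOn (f i) (Icc (a i) (a i + d)))
    (hmeet : MeetAtMostOnce Finset.univ (fun i => Icc (a i) (a i + d)) f) :
    (envelopeTies Finset.univ (fun i => Icc (a i) (a i + d)) f).ncard ≤ 27 * Fintype.card ι := by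
  classical
  set N : ι → Finset ℤ := fun i => Finset.Icc (⌊a i / d⌋ - 1) (⌊a i / d⌋ + 1)
  set K := Finset.univ.biUnion N
  have hN : ∀ i, (N i).card = 3 := fun i => by simp only [N, Int.card_Icc]; omega
  have hwin : ∀ k : ℤ, (envelopeTies (windowFamily a d k) (fun i => Icc (a i) (a i + d)) f ∩
      Icc (k * d) ((k + 1) * d)).ncard ≤ 8 * (windowFamily a d k).card + 1 := by
    refine fun k => ncard_envelopeTies_inter_Icc_le (fun i _ => hf i)
      (hmeet.mono (Finset.subset_univ _) fun _ _ => subset_rfl) fun i _ => ?_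
    rcases le_or_gt (a i) (k * d) with h | h
    · exact Or.inr h
    · exact Or.inl (by linarith)
  have hsum : ∑ k ∈ K, (windowFamily a d k).card ≤ 3 * Fintype.card ι := by
    have := Finset.sum_card_bipartiteAbove_eq_sum_card_bipartiteBelow (s := K)
      (t := Finset.univ) (r := fun k i => i ∈ windowFamily a d k)
    simp only [Finset.bipartiteAbove, Finset.bipartiteBelow, Finset.filter_univ_mem] at this
    rw [this]
    calc _ ≤ ∑ i : ι, (N i).card := Finset.sum_le_sum fun i _ => Finset.card_le_card fun k hk =>
          mem_Icc_floor_of_mem_windowFamily hd (Finset.mem_filter.1 hk).2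
      _ = 3 * Fintype.card ι := by simp [hN, mul_comm]
  have hK : K.card ≤ 3 * Fintype.card ι :=
    Finset.card_biUnion_le.trans (by simp [hN, mul_comm])
  calc _ ≤ (⋃ k ∈ K, envelopeTies (windowFamily a d k) (fun i => Icc (a i) (a i + d)) f ∩
          Icc (k * d) ((k + 1) * d)).ncard :=
        ncard_le_ncard (envelopeTies_subset_biUnion_windowFamily hd)
          (K.finite_toSet.biUnion fun k _ => (hmeet.mono (Finset.subset_univ _)
            fun _ _ => subset_rfl).envelopeTies_finite.inter_of_left _)
    _ ≤ ∑ k ∈ K, (8 * (windowFamily a d k).card + 1) :=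
        (K.set_ncard_biUnion_le _).trans (Finset.sum_le_sum fun k _ => hwin k)
    _ = 8 * ∑ k ∈ K, (windowFamily a d k).card + K.card := by
        rw [Finset.sum_add_distrib, ← Finset.mul_sum, Finset.card_eq_sum_ones]
    _ ≤ 27 * Fintype.card ι := by omega

end EqualLength

end LowerEnvelope

open LowerEnvelope MeasureTheory

theorem lower_envelope_linear_breakpoints_general (c : ℝ) :
    ∃ K : ℝ, ∀ (n : ℕ) (d : ℝ), 0 < d → ∀ (a : Fin n → ℝ) (f : Fin n → ℝ → ℝ),
      (∀ i, ContinuousOn (f i) (Set.Icc (a i) (a i + d))) →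
      (∀ i j : Fin n, i ≠ j →
        {x | x ∈ Set.Icc (a i) (a i + d) ∩ Set.Icc (a j) (a j + d) ∧
          f i x = f j x}.Subsingleton) →
      (volume (⋃ i, Set.Icc (a i) (a i + d))).toReal = c * d →
      ({x : ℝ | ∃ i : Fin n, x = a i ∨ x = a i + d} ∪
        {x : ℝ | ∃ i j : Fin n, i ≠ j ∧
          x ∈ Set.Icc (a i) (a i + d) ∩ Set.Icc (a j) (a j + d) ∧
          f i x = f j x ∧
          ∀ k : Fin n, x ∈ Set.Icc (a k) (a k + d) → f i x ≤ f k x}).ncard ≤ K * n := by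
  refine ⟨29, fun n d hd a f hf hmeet _ => ?_⟩
  have hmeet' : MeetAtMostOnce Finset.univ (fun i => Icc (a i) (a i + d)) f :=
    fun i _ j _ hij => hmeet i j hij
  have hties : {x : ℝ | ∃ i j : Fin n, i ≠ j ∧
      x ∈ Set.Icc (a i) (a i + d) ∩ Set.Icc (a j) (a j + d) ∧ f i x = f j x ∧
      ∀ k : Fin n, x ∈ Set.Icc (a k) (a k + d) → f i x ≤ f k x} ⊆
      envelopeTies Finset.univ (fun i => Icc (a i) (a i + d)) f := by
    rintro x ⟨i, j, hij, ⟨hxi, hxj⟩, hfx, hmin⟩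
    exact ⟨i, Finset.mem_univ _, j, Finset.mem_univ _, hij, ⟨hxi, fun k _ => hmin k⟩,
      ⟨hxj, fun k _ hk => hfx ▸ hmin k hk⟩⟩
  have hE := ncard_setOf_exists_eq_or_eq_le a fun i => a i + d
  have hT := ncard_envelopeTies_le_of_equal_length hd hf hmeet'
  rw [Fintype.card_fin] at hE hT
  have := (ncard_union_le _ _).trans
    (add_le_add hE ((ncard_le_ncard hties hmeet'.envelopeTies_finite).trans hT))
  exact_mod_cast this.trans (by omega : 2 * n + 27 * n ≤ 29 * n)

/-- Let `f 1, …, f n` be partially defined continuous real functions, each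
`f i` defined on an interval `D i = [a i, a i + d]` of the same length `d > 0`, such that
any two of them intersect at most once.  If the union of the domains has total measure
`c · d`, then the lower envelope has at most `K · n` breakpoints, where `K` depends only
on `c`.  Breakpoints are domain endpoints together with intersection points of two
functions lying on the lower envelope (points where both functions attain the pointwise
minimum of all functions defined there). -/
theorem lower_envelope_linear_breakpoints (c : ℝ) (hc : 0 < c) :
    ∃ K : ℝ, ∀ (n : ℕ) (d : ℝ), 0 < d → ∀ (a : Fin n → ℝ) (f : Fin n → ℝ → ℝ),
      (∀ i, ContinuousOn (f i) (Set.Icc (a i) (a i + d))) →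
      (∀ i j : Fin n, i ≠ j →
        {x | x ∈ Set.Icc (a i) (a i + d) ∩ Set.Icc (a j) (a j + d) ∧
          f i x = f j x}.Subsingleton) →
      (volume (⋃ i, Set.Icc (a i) (a i + d))).toReal = c * d →
      ({x : ℝ | ∃ i : Fin n, x = a i ∨ x = a i + d} ∪
        {x : ℝ | ∃ i j : Fin n, i ≠ j ∧
          x ∈ Set.Icc (a i) (a i + d) ∩ Set.Icc (a j) (a j + d) ∧
          f i x = f j x ∧
          ∀ k : Fin n, x ∈ Set.Icc (a k) (a k + d) → f i x ≤ f k x}).ncard ≤ K * n :=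
  lower_envelope_linear_breakpoints_general c
end

section
/- If a Davenport–Schinzel sequence of order 3 on n symbols (no immediate repetitions, no alternating subsequence a,b,a,b,a of length 5) exists, then its length is at most C·n·α(n) for some universal constant C, where α is the inverse Ackermann function; in particular, its length is O(n log n). -/
/-- A sequence has no two consecutive equal entries. -/
def NoRepeat {L n : ℕ} (u : Fin L → Fin n) : Prop :=
  ∀ (i : Fin L) (h : i.val + 1 < L), u i ≠ u ⟨i.val + 1, h⟩

/-- The sequence `u` contains an alternating subsequence `a b a b …` of length `len`
for two distinct symbols `a`, `b`. -/
def HasAlt {L n : ℕ} (u : Fin L → Fin n) (len : ℕ) : Prop :=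
  ∃ (a b : Fin n) (idx : Fin len → Fin L), a ≠ b ∧ StrictMono idx ∧
    ∀ j : Fin len, u (idx j) = if j.val % 2 = 0 then a else b

/-- `u` is a Davenport–Schinzel sequence of order `s`: no immediate repetitions and no
alternating subsequence of length `s + 2`. -/
def IsDS (s : ℕ) {L n : ℕ} (u : Fin L → Fin n) : Prop :=
  NoRepeat u ∧ ¬ HasAlt u (s + 2)

/-- `lambdaDS s m` is the maximum length of a Davenport–Schinzel sequence of order `s`
on `m` symbols. -/
noncomputable def lambdaDS (s m : ℕ) : ℕ :=
  sSup {L : ℕ | ∃ u : Fin L → Fin m, IsDS s u}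

/-!
Remove from a Davenport–Schinzel sequence of order 3 of length `L` on `n` symbols all
occurrences of its rarest symbol `a` (at most `L / n` of them). Two equal symbols become
adjacent only where the sequence read `x a x`, and this can happen only at the first and the
last occurrence of `a`, since otherwise `a x a x a` would be a subsequence. Deleting at most
two more entries leaves a Davenport–Schinzel sequence of order 3 on `n - 1` symbols, so
`L (1 - 1/n) - 2 ≤ λ₃(n - 1)`. Hence `λ₃(n) / n` grows by at most `2 / (n - 1)` per step,
which sums to `O(log n)`.
-/

namespace DavenportSchinzel

open List Real

variable {α : Type*}

def AbabaFree (l : List α) : Prop := ∀ a b, a ≠ b → ¬ [a, b, a, b, a] <+ l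

theorem AbabaFree.sublist {l l' : List α} (h : AbabaFree l) (hs : l' <+ l) : AbabaFree l' :=
  fun a b hab hsub => h a b hab (hsub.trans hs)

theorem exists_isChain_sublist_append {l₁ l₂ : List α} (h₁ : l₁.IsChain (· ≠ ·))
    (h₂ : l₂.IsChain (· ≠ ·)) :
    ∃ w, w <+ l₁ ++ l₂ ∧ w.IsChain (· ≠ ·) ∧ l₁.length + l₂.length ≤ w.length + 1 := by
  by_cases hjoin : ∀ x ∈ l₁.getLast?, ∀ y ∈ l₂.head?, x ≠ y
  · exact ⟨l₁ ++ l₂, Sublist.refl _, isChain_append.2 ⟨h₁, h₂, hjoin⟩, by simp⟩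
  · obtain ⟨x, hx, y, hy, rfl⟩ : ∃ x ∈ l₁.getLast?, ∃ y ∈ l₂.head?, x = y := by
      simpa using hjoin
    obtain ⟨t, rfl⟩ : ∃ t, l₂ = x :: t := by
      cases l₂ with
      | nil => simp at hy
      | cons y t => exact ⟨t, by simpa using hy⟩
    refine ⟨l₁ ++ t, (sublist_cons_self x t).append_left l₁,
      isChain_append.2 ⟨h₁, h₂.tail, ?_⟩, by simp only [length_append, length_cons]; omega⟩
    rintro x' hx' z hz rfl
    rw [Option.mem_unique hx' hx] at hz
    exact (isChain_cons.1 h₂).1 x hz rfl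

theorem eq_append_cons_notMem_right_of_mem {a : α} {l : List α} (h : a ∈ l) :
    ∃ s t, l = s ++ a :: t ∧ a ∉ t := by
  obtain ⟨t, s, hl, ht⟩ := eq_append_cons_of_mem (mem_reverse.2 h)
  exact ⟨s.reverse, t.reverse, by simpa using congrArg reverse hl, by simpa using ht⟩

variable [DecidableEq α]

theorem filter_ne_eq_self {a : α} {l : List α} (h : a ∉ l) : l.filter (· ≠ a) = l :=
  filter_eq_self.2 fun _ hx => by simpa using ne_of_mem_of_not_mem hx h

theorem isChain_filter_ne {a : α} {m : List α} (hch : m.IsChain (· ≠ ·))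
    (h : ∀ x, x ≠ a → ¬ [x, a, x] <+ m) : (m.filter (· ≠ a)).IsChain (· ≠ ·) := by
  induction m with
  | nil => simp
  | cons y m ih =>
    have hm := ih hch.tail fun x hx hs => h x hx (hs.cons y)
    by_cases hya : y = a
    · simpa [hya] using hm
    rw [filter_cons_of_pos (by simpa using hya)]
    refine isChain_cons.2 ⟨?_, hm⟩
    rintro z hz rfl
    cases m with
    | nil => simp at hz
    | cons c m =>
      have hcy : y ≠ c := (isChain_cons_cons.1 hch).1
      by_cases hca : c = a
      · subst hca
        rw [filter_cons_of_neg (by simp)] at hz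
        have hym : y ∈ m := (mem_filter.1 (mem_of_mem_head? hz)).1
        exact h y hya (((singleton_sublist.2 hym).cons_cons c).cons_cons y)
      · rw [filter_cons_of_pos (by simpa using hca)] at hz
        exact hcy (Option.some.inj hz).symm

/-- Between the first and the last `a`, no `x a x` occurs, as it would give `a x a x a`. -/
theorem exists_filter_ne_eq_append_isChain {l : List α} (hch : l.IsChain (· ≠ ·))
    (hfree : AbabaFree l) (a : α) :
    ∃ u m w, l.filter (· ≠ a) = u ++ m ++ w ∧
      u.IsChain (· ≠ ·) ∧ m.IsChain (· ≠ ·) ∧ w.IsChain (· ≠ ·) := by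
  by_cases hal : a ∈ l
  swap
  · exact ⟨l, [], [], by rw [filter_ne_eq_self hal, append_nil, append_nil], hch, .nil, .nil⟩
  obtain ⟨u, v, rfl, hau⟩ := eq_append_cons_of_mem hal
  by_cases hav : a ∈ v
  swap
  · refine ⟨u, [], v, ?_, hch.left_of_append, .nil, hch.right_of_append.tail⟩
    rw [filter_append, filter_cons_of_neg (by simp), filter_ne_eq_self hau,
      filter_ne_eq_self hav, append_nil]
  obtain ⟨m, w, rfl, haw⟩ := eq_append_cons_notMem_right_of_mem hav
  refine ⟨u, m.filter (· ≠ a), w, ?_, hch.left_of_append, ?_,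
    hch.right_of_append.tail.right_of_append.tail⟩
  · rw [filter_append, filter_cons_of_neg (by simp), filter_append, filter_cons_of_neg (by simp),
      filter_ne_eq_self hau, filter_ne_eq_self haw, append_assoc]
  refine isChain_filter_ne (hch.infix ?_) fun x hxa hs => hfree a x (Ne.symm hxa) ?_
  · exact ⟨u ++ [a], a :: w, by simp⟩
  · simpa using (nil_sublist u).append
      ((hs.cons_cons a).append (singleton_sublist.2 (mem_cons_self (a := a) (l := w))))

theorem length_filter_ne_add_count (a : α) (l : List α) :
    (l.filter (· ≠ a)).length + l.count a = l.length := by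
  induction l with
  | nil => rfl
  | cons x l ih => by_cases hx : x = a <;> simp_all <;> omega

theorem exists_isChain_sublist_notMem {l : List α} (hch : l.IsChain (· ≠ ·))
    (hfree : AbabaFree l) (a : α) :
    ∃ w, w <+ l ∧ w.IsChain (· ≠ ·) ∧ a ∉ w ∧ l.length ≤ w.length + l.count a + 2 := by
  obtain ⟨u, m, v, hsplit, hu, hm, hv⟩ := exists_filter_ne_eq_append_isChain hch hfree a
  obtain ⟨w₁, hw₁, hch₁, hlen₁⟩ := exists_isChain_sublist_append hu hm
  obtain ⟨w, hw, hch₂, hlen₂⟩ := exists_isChain_sublist_append hch₁ hv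
  have hsub : w <+ l.filter (· ≠ a) := hw.trans (hsplit ▸ hw₁.append_right v)
  have hlen := length_filter_ne_add_count a l
  rw [hsplit, length_append, length_append] at hlen
  exact ⟨w, hsub.trans filter_sublist, hch₂, fun ha => by simpa using hsub.subset ha, by omega⟩

theorem exists_mem_count_mul_card_le_length {l : List α} (hl : l ≠ []) :
    ∃ a ∈ l, l.count a * l.toFinset.card ≤ l.length := by
  obtain ⟨a, ha, hmin⟩ := l.toFinset.exists_min_image l.count (toFinset_nonempty_iff l |>.2 hl)
  refine ⟨a, mem_toFinset.1 ha, ?_⟩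
  simpa [mul_comm] using l.toFinset.card_nsmul_le_sum l.count _ hmin

theorem exists_sublist_card_toFinset_le {l : List α} {n : ℕ} (hch : l.IsChain (· ≠ ·))
    (hfree : AbabaFree l) (hcard : l.toFinset.card ≤ n + 1) :
    ∃ w, w <+ l ∧ w.IsChain (· ≠ ·) ∧ w.toFinset.card ≤ n ∧
      ∃ c : ℕ, c * (n + 1) ≤ l.length ∧ l.length ≤ w.length + c + 2 := by
  rcases hcard.lt_or_eq with hlt | heq
  · exact ⟨l, Sublist.refl l, hch, Nat.lt_succ_iff.1 hlt, 0, by simp, by simp⟩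
  have hl : l ≠ [] := by rintro rfl; simp at heq
  obtain ⟨a, hal, hcount⟩ := exists_mem_count_mul_card_le_length hl
  obtain ⟨w, hw, hwch, haw, hlen⟩ := exists_isChain_sublist_notMem hch hfree a
  refine ⟨w, hw, hwch, ?_, l.count a, heq ▸ hcount, hlen⟩
  have hsub : w.toFinset ⊆ l.toFinset.erase a := fun x hx =>
    Finset.mem_erase.2 ⟨fun h => haw (h ▸ mem_toFinset.1 hx),
      mem_toFinset.2 (hw.subset (mem_toFinset.1 hx))⟩
  simpa [Finset.card_erase_of_mem (mem_toFinset.2 hal), heq] using Finset.card_le_card hsub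

theorem length_le_one_of_card_toFinset_le_one {l : List α} (hch : l.IsChain (· ≠ ·))
    (hcard : l.toFinset.card ≤ 1) : l.length ≤ 1 := by
  match l, hch with
  | [], _ | [_], _ => simp
  | x :: y :: t, hch =>
    have hxy : x ≠ y := (isChain_cons_cons.1 hch).1
    have : 1 < (x :: y :: t).toFinset.card := Finset.one_lt_card.2 ⟨x, by simp, y, by simp, hxy⟩
    omega

theorem one_div_le_log_add_two_sub_log_add_one (n : ℕ) :
    1 / ((n : ℝ) + 2) ≤ log (n + 2) - log (n + 1) := by
  have h := one_sub_inv_le_log_of_pos (x := ((n : ℝ) + 2) / (n + 1)) (by positivity)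
  rw [log_div (by positivity) (by positivity), inv_div] at h
  calc 1 / ((n : ℝ) + 2) = 1 - (n + 1) / (n + 2) := by field_simp; ring
    _ ≤ _ := h

theorem le_six_mul_log_of_recurrence {n : ℕ} (hn : 1 ≤ n) {L L' c : ℝ} (hc : c * (n + 1) ≤ L)
    (hL : L ≤ L' + c + 2) (hL' : L' ≤ 6 * n * log (n + 1)) :
    L ≤ 6 * (n + 1) * log (n + 2) := by
  have hn' : (1 : ℝ) ≤ n := by exact_mod_cast hn
  set g := log (n + 2) - log (n + 1) with hg
  have hgap : 2 ≤ 6 * n * g := by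
    have h := one_div_le_log_add_two_sub_log_add_one n
    rw [← hg, div_le_iff₀ (by positivity)] at h
    nlinarith
  have hnL : n * L ≤ n * (6 * (n + 1) * log (n + 2)) := by
    calc n * L ≤ (n + 1) * (L' + 2) := by nlinarith
      _ ≤ (n + 1) * (6 * n * log (n + 1) + 6 * n * g) := by gcongr
      _ = n * (6 * (n + 1) * log (n + 2)) := by rw [hg]; ring
  exact le_of_mul_le_mul_left hnL (by positivity)

theorem length_le_six_mul_log (n : ℕ) {l : List α} (hch : l.IsChain (· ≠ ·))
    (hfree : AbabaFree l) (hcard : l.toFinset.card ≤ n) :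
    (l.length : ℝ) ≤ 6 * n * log (n + 1) := by
  induction n generalizing l with
  | zero => simp_all
  | succ n ih =>
    rcases Nat.eq_zero_or_pos n with rfl | hn
    · have : (l.length : ℝ) ≤ 1 := by
        exact_mod_cast length_le_one_of_card_toFinset_le_one hch hcard
      norm_num [one_add_one_eq_two]
      linarith [log_two_gt_d9]
    obtain ⟨w, hw, hwch, hwcard, c, hc, hlen⟩ := exists_sublist_card_toFinset_le hch hfree hcard
    have := le_six_mul_log_of_recurrence hn (L := l.length) (L' := w.length) (c := c)
      (by exact_mod_cast hc) (by exact_mod_cast hlen) (ih hwch (hfree.sublist hw) hwcard)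
    push_cast
    rwa [add_assoc, one_add_one_eq_two]

theorem isChain_ofFn_of_noRepeat {L n : ℕ} {u : Fin L → Fin n} (h : NoRepeat u) :
    (ofFn u).IsChain (· ≠ ·) :=
  isChain_ofFn.2 fun i hi => h ⟨i, by omega⟩ hi

theorem ababaFree_ofFn_of_not_hasAlt {L n : ℕ} {u : Fin L → Fin n} (h : ¬ HasAlt u 5) :
    AbabaFree (ofFn u) := by
  intro a b hab hsub
  obtain ⟨f, hf⟩ := sublist_iff_exists_fin_orderEmbedding_get_eq.1 hsub
  refine h ⟨a, b, fun j => ⟨f j, by simpa using (f j).isLt⟩, hab,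
    fun j k hjk => Fin.mk_lt_mk.2 (f.strictMono hjk), fun j => ?_⟩
  have hj : u _ = _ := (get_ofFn (f := u) _).symm.trans (hf j).symm
  fin_cases j <;> exact hj

end DavenportSchinzel

/-- A Davenport–Schinzel sequence of order 3 on `n` symbols (no immediate
repetitions, no alternating subsequence `a b a b a` of length 5) has length `O(n log n)`:
there is a universal constant `C > 0` with `L ≤ C · n · log (n + 1)`. -/
theorem ds_order_three_length :
    ∃ C : ℝ, 0 < C ∧ ∀ (n L : ℕ) (u : Fin L → Fin n), IsDS 3 u →
      (L : ℝ) ≤ C * n * Real.log (n + 1) := by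
  refine ⟨6, by norm_num, fun n L u ⟨hrep, halt⟩ => ?_⟩
  have hcard : (List.ofFn u).toFinset.card ≤ n :=
    (Finset.card_le_univ _).trans_eq (Fintype.card_fin n)
  simpa using DavenportSchinzel.length_le_six_mul_log n
    (DavenportSchinzel.isChain_ofFn_of_noRepeat hrep)
    (DavenportSchinzel.ababaFree_ofFn_of_not_hasAlt halt) hcard
end
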